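/- arXiv:2510.21569 — 5 statements merged into one kernel-verified Lean document; each statement's English description precedes it below -/
import Mathlib

section
/- Let A = A'⊗_k A'' be a tensor product of graded Artinian k-algebras, ℓ'∈[A']₁, ℓ''∈[A'']₁, and ℓ = ℓ'⊗1 + 1⊗ℓ''. If the multiplication maps ·ℓ':[A']_i → [A']_{i+1} and ·ℓ'':[A'']_j → [A'']_{j+1} are both not surjective, then ·ℓ:[A]_{i+j+1} → [A]_{i+j+2} is not surjective. -/
open TensorProduct

section Aux
variable {k A : Type*} [CommSemiring k] [CommRing A] [Algebra k A]
  (𝒜 : ℕ → Submodule k A) [GradedAlgebra 𝒜]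

/-- Projection onto the `n`-th graded piece, as a `k`-linear endomorphism. -/
noncomputable def gproj (n : ℕ) : A →ₗ[k] A :=
  ((𝒜 n).subtype.comp (DirectSum.component k ℕ (fun m => 𝒜 m) n)).comp
    (DirectSum.decomposeLinearEquiv 𝒜).toLinearMap

lemma gproj_of_mem_same {n m : ℕ} {a : A} (h : m = n) (ha : a ∈ 𝒜 m) :
    gproj 𝒜 n a = a := by
  subst h
  simp only [gproj, LinearMap.coe_comp, Function.comp_apply, LinearEquiv.coe_coe,
    DirectSum.decomposeLinearEquiv_apply, DirectSum.component, DFinsupp.lapply_apply,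
    Submodule.coe_subtype]
  exact DirectSum.decompose_of_mem_same 𝒜 ha

lemma gproj_of_mem_ne {n m : ℕ} {a : A} (h : m ≠ n) (ha : a ∈ 𝒜 m) :
    gproj 𝒜 n a = 0 := by
  simp only [gproj, LinearMap.coe_comp, Function.comp_apply, LinearEquiv.coe_coe,
    DirectSum.decomposeLinearEquiv_apply, DirectSum.component, DFinsupp.lapply_apply,
    Submodule.coe_subtype]
  exact DirectSum.decompose_of_mem_ne 𝒜 ha h

end Aux


/-- The degree-`d` graded piece of the tensor product of two graded algebras:
`[A'⊗A'']_d = ⊕_{p+q=d} [A']_p ⊗ [A'']_q`, realized as the submodule generated by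
the elementary tensors `x ⊗ y` with `x ∈ [A']_p`, `y ∈ [A'']_q`, `p + q = d`. -/
noncomputable def tensorPiece {k A' A'' : Type*} [CommSemiring k]
    [CommRing A'] [CommRing A''] [Algebra k A'] [Algebra k A'']
    (𝒜 : ℕ → Submodule k A') (ℬ : ℕ → Submodule k A'') (d : ℕ) :
    Submodule k (A' ⊗[k] A'') :=
  ⨆ pq : {pq : ℕ × ℕ // pq.1 + pq.2 = d},
    Submodule.span k {z | ∃ x ∈ 𝒜 pq.1.1, ∃ y ∈ ℬ pq.1.2, z = x ⊗ₜ[k] y}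

/-- Lemma 7.8(a) of Boij–Migliore–Miró-Roig–Nagel–Zanello: in a tensor product
`A = A' ⊗_k A''` of graded Artinian algebras, with `ℓ = ℓ'⊗1 + 1⊗ℓ''` for linear
forms `ℓ' ∈ [A']₁`, `ℓ'' ∈ [A'']₁`, if `·ℓ' : [A']_i → [A']_{i+1}` and
`·ℓ'' : [A'']_j → [A'']_{j+1}` are both not surjective, then neither is
`·ℓ : [A]_{i+j+1} → [A]_{i+j+2}`. -/
theorem tensor_not_surjective
    (k A' A'' : Type*) [Field k] [CommRing A'] [CommRing A'']
    [Algebra k A'] [Algebra k A'']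
    (𝒜 : ℕ → Submodule k A') (ℬ : ℕ → Submodule k A'')
    [GradedAlgebra 𝒜] [GradedAlgebra ℬ]
    (hfinA : ∀ n, Module.Finite k (𝒜 n)) (hfinB : ∀ n, Module.Finite k (ℬ n))
    (hartA : ∃ D, ∀ n, D < n → 𝒜 n = ⊥) (hartB : ∃ D, ∀ n, D < n → ℬ n = ⊥)
    (i j : ℕ) (ℓ' ℓ'' : _) (hℓ' : ℓ' ∈ 𝒜 1) (hℓ'' : ℓ'' ∈ ℬ 1)
    (h1 : ¬ ∀ y ∈ 𝒜 (i + 1), ∃ x ∈ 𝒜 i, ℓ' * x = y)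
    (h2 : ¬ ∀ y ∈ ℬ (j + 1), ∃ x ∈ ℬ j, ℓ'' * x = y) :
    ¬ ∀ z ∈ tensorPiece 𝒜 ℬ (i + j + 2), ∃ w ∈ tensorPiece 𝒜 ℬ (i + j + 1),
        (ℓ' ⊗ₜ[k] (1 : A'') + (1 : A') ⊗ₜ[k] ℓ'') * w = z := by
  push_neg at h1 h2
  obtain ⟨y₀, hy₀mem, hy₀⟩ := h1
  obtain ⟨y₁, hy₁mem, hy₁⟩ := h2
  -- images of multiplication maps
  set T' : Submodule k A' := (𝒜 i).map (LinearMap.mulLeft k ℓ') with hT'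
  set T'' : Submodule k A'' := (ℬ j).map (LinearMap.mulLeft k ℓ'') with hT''
  have hy₀T : y₀ ∉ T' := by
    rintro ⟨x, hx, hxe⟩
    exact hy₀ x hx hxe
  have hy₁T : y₁ ∉ T'' := by
    rintro ⟨x, hx, hxe⟩
    exact hy₁ x hx hxe
  obtain ⟨φ, hφ0, hφT⟩ := T'.exists_dual_map_eq_bot_of_notMem hy₀T inferInstance
  obtain ⟨ψ, hψ0, hψT⟩ := T''.exists_dual_map_eq_bot_of_notMem hy₁T inferInstance
  have hφT' : ∀ x ∈ 𝒜 i, φ (ℓ' * x) = 0 := by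
    intro x hx
    have : φ (ℓ' * x) ∈ T'.map φ := ⟨ℓ' * x, ⟨x, hx, rfl⟩, rfl⟩
    rwa [hφT, Submodule.mem_bot] at this
  have hψT' : ∀ y ∈ ℬ j, ψ (ℓ'' * y) = 0 := by
    intro y hy
    have : ψ (ℓ'' * y) ∈ T''.map ψ := ⟨ℓ'' * y, ⟨y, hy, rfl⟩, rfl⟩
    rwa [hψT, Submodule.mem_bot] at this
  -- the separating functional on the tensor product
  set f : A' →ₗ[k] k := φ.comp (gproj 𝒜 (i + 1)) with hf
  set g : A'' →ₗ[k] k := ψ.comp (gproj ℬ (j + 1)) with hg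
  set Φ : A' ⊗[k] A'' →ₗ[k] k := (LinearMap.mul' k k).comp (TensorProduct.map f g) with hΦ
  have hΦtmul : ∀ (x : A') (y : A''), Φ (x ⊗ₜ[k] y) = f x * g y := by
    intro x y; simp [hΦ]
  set ℓ : A' ⊗[k] A'' := ℓ' ⊗ₜ[k] (1 : A'') + (1 : A') ⊗ₜ[k] ℓ'' with hℓ
  set L : A' ⊗[k] A'' →ₗ[k] k := Φ.comp (LinearMap.mulLeft k ℓ) with hL
  -- L vanishes on tensorPiece (i+j+1)
  have hLker : tensorPiece 𝒜 ℬ (i + j + 1) ≤ LinearMap.ker L := by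
    refine iSup_le fun pq => Submodule.span_le.2 ?_
    rintro z ⟨x, hx, y, hy, rfl⟩
    obtain ⟨⟨p, q⟩, hpq⟩ := pq
    simp only at hx hy hpq
    have hmul : ℓ * (x ⊗ₜ[k] y) = (ℓ' * x) ⊗ₜ[k] y + x ⊗ₜ[k] (ℓ'' * y) := by
      rw [hℓ, add_mul, Algebra.TensorProduct.tmul_mul_tmul,
        Algebra.TensorProduct.tmul_mul_tmul, one_mul, one_mul]
    have hx' : ℓ' * x ∈ 𝒜 (1 + p) := SetLike.mul_mem_graded hℓ' hx
    have hy' : ℓ'' * y ∈ ℬ (1 + q) := SetLike.mul_mem_graded hℓ'' hy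
    have key : Φ (ℓ * (x ⊗ₜ[k] y)) = 0 := by
      rw [hmul, map_add, hΦtmul, hΦtmul, hf, hg]
      simp only [LinearMap.coe_comp, Function.comp_apply]
      by_cases hp : p = i
      · have hq : q = j + 1 := by omega
        rw [gproj_of_mem_same 𝒜 (by omega) hx', gproj_of_mem_same ℬ (by omega) hy,
          gproj_of_mem_ne 𝒜 (by omega) hx, gproj_of_mem_ne ℬ (by omega) hy',
          hφT' x (hp ▸ hx)]
        simp
      · by_cases hp' : p = i + 1
        · have hq : q = j := by omega
          rw [gproj_of_mem_ne 𝒜 (by omega) hx', gproj_of_mem_ne ℬ (by omega) hy,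
            gproj_of_mem_same 𝒜 (by omega) hx, gproj_of_mem_same ℬ (by omega) hy',
            hψT' y (hq ▸ hy)]
          simp
        · rw [gproj_of_mem_ne 𝒜 (by omega) hx', gproj_of_mem_ne 𝒜 (by omega) hx]
          simp
    simpa [hL, LinearMap.mem_ker] using key
  intro H
  have hz₀ : y₀ ⊗ₜ[k] y₁ ∈ tensorPiece 𝒜 ℬ (i + j + 2) := by
    refine le_iSup (fun pq : {pq : ℕ × ℕ // pq.1 + pq.2 = i + j + 2} =>
      Submodule.span k {z | ∃ x ∈ 𝒜 pq.1.1, ∃ y ∈ ℬ pq.1.2, z = x ⊗ₜ[k] y})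
      ⟨(i + 1, j + 1), by omega⟩ ?_
    exact Submodule.subset_span ⟨y₀, hy₀mem, y₁, hy₁mem, rfl⟩
  obtain ⟨w, hw, hwe⟩ := H (y₀ ⊗ₜ[k] y₁) hz₀
  have h0 : Φ (ℓ * w) = 0 := hLker hw
  rw [hwe] at h0
  rw [hΦtmul, hf, hg] at h0
  simp only [LinearMap.coe_comp, Function.comp_apply] at h0
  rw [gproj_of_mem_same 𝒜 rfl hy₀mem, gproj_of_mem_same ℬ rfl hy₁mem] at h0
  exact hφ0 (by
    rcases mul_eq_zero.1 h0 with h | h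
    · exact h
    · exact absurd h hψ0)
end

section
/- Let A = A'⊗_k A'' be a tensor product of graded Artinian k-algebras, ℓ'∈[A']₁, ℓ''∈[A'']₁, and ℓ = ℓ'⊗1 + 1⊗ℓ''. If the multiplication maps ·ℓ':[A']_i → [A']_{i+1} and ·ℓ'':[A'']_j → [A'']_{j+1} are both not injective, then ·ℓ:[A]_{i+j} → [A]_{i+j+1} is not injective. -/
open TensorProduct

/-- Lemma 7.8(b) of Boij–Migliore–Miró-Roig–Nagel–Zanello: in a tensor product
`A = A' ⊗_k A''` of graded Artinian algebras, with `ℓ = ℓ'⊗1 + 1⊗ℓ''` for linear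
forms `ℓ' ∈ [A']₁`, `ℓ'' ∈ [A'']₁`, if `·ℓ' : [A']_i → [A']_{i+1}` and
`·ℓ'' : [A'']_j → [A'']_{j+1}` are both not injective, then neither is
`·ℓ : [A]_{i+j} → [A]_{i+j+1}`. -/
theorem tensor_not_injective
    (k A' A'' : Type*) [Field k] [CommRing A'] [CommRing A'']
    [Algebra k A'] [Algebra k A'']
    (𝒜 : ℕ → Submodule k A') (ℬ : ℕ → Submodule k A'')
    [GradedAlgebra 𝒜] [GradedAlgebra ℬ]
    (hfinA : ∀ n, Module.Finite k (𝒜 n)) (hfinB : ∀ n, Module.Finite k (ℬ n))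
    (hartA : ∃ D, ∀ n, D < n → 𝒜 n = ⊥) (hartB : ∃ D, ∀ n, D < n → ℬ n = ⊥)
    (i j : ℕ) (ℓ' ℓ'' : _) (hℓ' : ℓ' ∈ 𝒜 1) (hℓ'' : ℓ'' ∈ ℬ 1)
    (h1 : ¬ ∀ x ∈ 𝒜 i, ℓ' * x = 0 → x = 0)
    (h2 : ¬ ∀ x ∈ ℬ j, ℓ'' * x = 0 → x = 0) :
    ¬ ∀ w ∈ tensorPiece 𝒜 ℬ (i + j),
        (ℓ' ⊗ₜ[k] (1 : A'') + (1 : A') ⊗ₜ[k] ℓ'') * w = 0 → w = 0 := by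
  push_neg at h1 h2
  obtain ⟨x, hxA, hx0, hx⟩ := h1
  obtain ⟨y, hyB, hy0, hy⟩ := h2
  intro H
  -- the witness
  have hmem : x ⊗ₜ[k] y ∈ tensorPiece 𝒜 ℬ (i + j) := by
    refine Submodule.mem_iSup_of_mem ⟨(i, j), rfl⟩ ?_
    exact Submodule.subset_span ⟨x, hxA, y, hyB, rfl⟩
  have hmul : (ℓ' ⊗ₜ[k] (1 : A'') + (1 : A') ⊗ₜ[k] ℓ'') * (x ⊗ₜ[k] y) = 0 := by
    rw [add_mul, Algebra.TensorProduct.tmul_mul_tmul, Algebra.TensorProduct.tmul_mul_tmul,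
      hx0, hy0, one_mul, one_mul, zero_tmul, tmul_zero, add_zero]
  have hzero := H _ hmem hmul
  -- but x ⊗ y ≠ 0
  obtain ⟨f, hf⟩ : ∃ f : A' →ₗ[k] k, f x ≠ 0 := by
    by_contra hc
    push_neg at hc
    exact hx ((Module.forall_dual_apply_eq_zero_iff k x).mp hc)
  obtain ⟨g, hg⟩ : ∃ g : A'' →ₗ[k] k, g y ≠ 0 := by
    by_contra hc
    push_neg at hc
    exact hy ((Module.forall_dual_apply_eq_zero_iff k y).mp hc)
  have : (TensorProduct.lid k k) ((TensorProduct.map f g) (x ⊗ₜ[k] y)) = f x * g y := by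
    simp [TensorProduct.map_tmul, smul_eq_mul]
  rw [hzero] at this
  simp at this
  rcases this with h | h
  exacts [hf h, hg h]
end

section
/- For all n ≥ 1, the modes λ_n of the independence polynomials of paths satisfy λ_n ≤ λ_{n+1} ≤ λ_n + 1. -/
/-- decrease condition -/
def Dcond (m k : ℕ) : Prop := (m - 2*k) * (m - 2*k - 1) ≤ (k+1) * (m - k)

instance : ∀ m k, Decidable (Dcond m k) := fun m k => by unfold Dcond; infer_instance

lemma Dcond_exists (m : ℕ) : ∃ k, Dcond m k := ⟨m, by unfold Dcond; simp [Nat.sub_eq_zero_of_le]; omega⟩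

lemma key_ident (m k : ℕ) :
    (m - k - 1).choose (k+1) * ((k+1) * (m-k)) = (m-k).choose k * ((m - 2*k) * (m - 2*k - 1)) := by
  rcases le_or_gt m k with h | h
  · have h1 : m - k = 0 := by omega
    have h2 : m - k - 1 = 0 := by omega
    rw [h2, h1]
    have : (0:ℕ).choose (k+1) = 0 := Nat.choose_eq_zero_of_lt (by omega)
    rw [this]
    rcases Nat.eq_zero_or_pos k with rfl | hk
    · have : m - 2*0 = 0 := by omega
      simp [this]; omega
    · have : m - 2*k = 0 := by omega
      simp [this]
  · obtain ⟨nn, hnn⟩ : ∃ nn, m - k = nn + 1 := ⟨m - k - 1, by omega⟩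
    have h2 : m - k - 1 = nn := by omega
    have h3 : m - 2*k = nn + 1 - k := by omega
    have h4 : m - 2*k - 1 = nn - k := by omega
    rw [h2, hnn, h4, h3]
    have e1 : nn.choose (k+1) * (k+1) = nn.choose k * (nn - k) := Nat.choose_succ_right_eq nn k
    have e2 : nn.choose k * (nn + 1) = (nn+1).choose k * (nn + 1 - k) := Nat.choose_mul_succ_eq nn k
    calc nn.choose (k+1) * ((k+1) * (nn+1)) = (nn.choose (k+1) * (k+1)) * (nn+1) := by ring
      _ = (nn.choose k * (nn - k)) * (nn+1) := by rw [e1]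
      _ = (nn.choose k * (nn+1)) * (nn - k) := by ring
      _ = ((nn+1).choose k * (nn + 1 - k)) * (nn - k) := by rw [e2]
      _ = (nn+1).choose k * ((nn + 1 - k) * (nn - k)) := by ring

lemma dec_iff (m k : ℕ) :
    (m - k - 1).choose (k+1) ≤ (m - k).choose k ↔ Dcond m k := by
  unfold Dcond
  rcases lt_or_ge m (2*k) with h | h
  · have hA : (m - k).choose k = 0 := Nat.choose_eq_zero_of_lt (by omega)
    have hB : (m - k - 1).choose (k+1) = 0 := Nat.choose_eq_zero_of_lt (by omega)
    have hq : m - 2*k = 0 := by omega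
    simp [hA, hB, hq]
  · rcases Nat.eq_zero_or_pos m with rfl | hm
    · have hk : k = 0 := by omega
      subst hk
      simp [Dcond]
    · have hA : 0 < (m - k).choose k := Nat.choose_pos (by omega)
      have hP : 0 < (k+1) * (m - k) := by
        have : 0 < m - k := by omega
        positivity
      constructor
      · intro hBA
        have := key_ident m k
        have h1 : (m - k).choose k * ((m - 2*k) * (m - 2*k - 1))
            ≤ (m - k).choose k * ((k+1) * (m-k)) := by
          rw [← this]; exact Nat.mul_le_mul_right _ hBA
        exact le_of_mul_le_mul_left h1 hA
      · intro hQP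
        have := key_ident m k
        have h1 : (m - k - 1).choose (k+1) * ((k+1) * (m-k))
            ≤ (m - k).choose k * ((k+1) * (m-k)) := by
          rw [this]; exact Nat.mul_le_mul_left _ hQP
        exact le_of_mul_le_mul_right h1 hP

lemma Dcond_step {m k : ℕ} (h : Dcond m k) : Dcond m (k+1) := by
  unfold Dcond at h ⊢
  rcases lt_or_ge m (2*k+4) with hm | hm
  · have : m - 2*(k+1) - 1 = 0 := by omega
    simp [this]
  · obtain ⟨t, rfl⟩ : ∃ t, m = 2*k+4+t := ⟨m - (2*k+4), by omega⟩
    have e1 : 2*k+4+t - 2*k = t + 4 := by omega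
    have e2 : 2*k+4+t - 2*k - 1 = t + 3 := by omega
    have e3 : 2*k+4+t - k = k + 4 + t := by omega
    have e4 : 2*k+4+t - 2*(k+1) = t + 2 := by omega
    have e5 : 2*k+4+t - 2*(k+1) - 1 = t + 1 := by omega
    have e6 : 2*k+4+t - (k+1) = k + 3 + t := by omega
    rw [e2, e1, e3] at h
    rw [e5, e4, e6]
    nlinarith

lemma Dcond_up {m k : ℕ} (h : Dcond (m+1) k) : Dcond m k := by
  unfold Dcond at h ⊢
  rcases lt_or_ge m (2*k+2) with hm | hm
  · have : m - 2*k - 1 = 0 := by omega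
    simp [this]
  · obtain ⟨t, ht⟩ : ∃ t, m - 2*k = t + 2 := ⟨m - 2*k - 2, by omega⟩
    have e1 : m + 1 - 2*k = t + 3 := by omega
    have e2 : m + 1 - 2*k - 1 = t + 2 := by omega
    have e3 : m + 1 - k = k + t + 3 := by omega
    have e4 : m - 2*k - 1 = t + 1 := by omega
    have e5 : m - k = k + t + 2 := by omega
    rw [e2, e1, e3] at h
    rw [e4, ht, e5]
    rcases le_or_gt (t+2) (k+1) with hc | hc
    · nlinarith
    · nlinarith

lemma Dcond_diag {m k : ℕ} (h : Dcond m k) : Dcond (m+1) (k+1) := by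
  unfold Dcond at h ⊢
  rcases lt_or_ge m (2*k+3) with hm | hm
  · have : m + 1 - 2*(k+1) - 1 = 0 := by omega
    simp [this]
  · obtain ⟨t, ht⟩ : ∃ t, m - 2*k = t + 3 := ⟨m - 2*k - 3, by omega⟩
    have e1 : m - 2*k - 1 = t + 2 := by omega
    have e2 : m - k = k + t + 3 := by omega
    have e3 : m + 1 - 2*(k+1) = t + 2 := by omega
    have e4 : m + 1 - 2*(k+1) - 1 = t + 1 := by omega
    have e5 : m + 1 - (k+1) = k + t + 3 := by omega
    rw [e1, ht, e2] at h
    rw [e4, e3, e5]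
    nlinarith

open Finset

/-- number of independent k-subsets of the path on `{0,...,n-1}` (as subsets of ℕ) -/
def Tcnt (n k : ℕ) : ℕ :=
  ((Finset.range n).powerset.filter fun s => (∀ x ∈ s, x+1 ∉ s) ∧ s.card = k).card

lemma Tcnt_zero (n : ℕ) : Tcnt n 0 = 1 := by
  unfold Tcnt
  rw [show ((Finset.range n).powerset.filter fun s => (∀ x ∈ s, x+1 ∉ s) ∧ s.card = 0) = {∅} by
    ext s
    simp only [mem_filter, mem_powerset, mem_singleton, Finset.card_eq_zero]
    constructor
    · rintro ⟨-, -, rfl⟩; rfl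
    · rintro rfl; simp]
  simp

lemma Tcnt_big {n k : ℕ} (h : n < k) : Tcnt n k = 0 := by
  unfold Tcnt
  rw [Finset.card_eq_zero, Finset.filter_eq_empty_iff]
  rintro s hs ⟨-, hcard⟩
  have := Finset.card_le_card (Finset.mem_powerset.mp hs)
  simp [hcard, Finset.card_range] at this
  omega

lemma Tcnt_rec (n k : ℕ) : Tcnt (n+2) (k+1) = Tcnt (n+1) (k+1) + Tcnt n k := by
  classical
  set P : Finset ℕ → Prop := fun s => (∀ x ∈ s, x+1 ∉ s) ∧ s.card = k+1 with hP
  have hsplit := Finset.card_filter_add_card_filter_not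
    (s := (Finset.range (n+2)).powerset.filter P) (p := fun s => (n+1) ∈ s)
  -- without n+1 : equals Tcnt (n+1) (k+1)
  have h1 : (((Finset.range (n+2)).powerset.filter P).filter fun s => (n+1) ∉ s).card
      = Tcnt (n+1) (k+1) := by
    unfold Tcnt
    congr 1
    ext s
    simp only [mem_filter, mem_powerset, hP, Finset.subset_iff, mem_range]
    constructor
    · rintro ⟨⟨hsub, hc⟩, hnot⟩
      refine ⟨fun x hx => ?_, hc⟩
      have hx2 := hsub hx
      have hx3 : x ≠ n+1 := fun he => hnot (he ▸ hx)
      omega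
    · rintro ⟨hsub, hc⟩
      exact ⟨⟨fun x hx => by have := hsub hx; omega, hc⟩, fun hmem => by have := hsub hmem; omega⟩
  -- with n+1 : equals Tcnt n k
  have h2 : (((Finset.range (n+2)).powerset.filter P).filter fun s => (n+1) ∈ s).card
      = Tcnt n k := by
    unfold Tcnt
    refine Finset.card_bij' (fun s _ => s.erase (n+1)) (fun s _ => insert (n+1) s) ?_ ?_ ?_ ?_
    · -- hi : erase lands in target
      rintro s hs
      simp only [mem_filter, mem_powerset, hP] at hs ⊢
      obtain ⟨⟨hsub, hcond, hcard⟩, hmem⟩ := hs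
      have hn : n ∉ s := fun hn => hcond n hn hmem
      refine ⟨?_, ?_, ?_⟩
      · intro x hx
        rw [Finset.mem_erase] at hx
        have := hsub hx.2
        rw [mem_range] at this ⊢
        rcases Nat.lt_or_ge x n with h|h
        · exact h
        · exfalso
          rcases Nat.lt_or_ge x (n+1) with h'|h'
          · have : x = n := by omega
            exact hn (this ▸ hx.2)
          · exact hx.1 (by omega)
      · intro x hx
        rw [Finset.mem_erase] at hx
        intro hx1
        exact hcond x hx.2 (Finset.mem_of_mem_erase hx1)
      · rw [Finset.card_erase_of_mem hmem, hcard]; omega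
    · -- hj : insert lands back
      rintro s hs
      simp only [mem_filter, mem_powerset, hP] at hs ⊢
      obtain ⟨hsub, hcond, hcard⟩ := hs
      have hnot : (n+1) ∉ s := fun h => by have := hsub h; rw [mem_range] at this; omega
      refine ⟨⟨?_, ?_, ?_⟩, Finset.mem_insert_self _ _⟩
      · intro x hx
        rw [Finset.mem_insert] at hx
        rw [mem_range]
        rcases hx with rfl | hx
        · omega
        · have := hsub hx; rw [mem_range] at this; omega
      · intro x hx
        rw [Finset.mem_insert] at hx
        intro hx1
        rw [Finset.mem_insert] at hx1
        rcases hx with rfl | hx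
        · rcases hx1 with h | h
          · omega
          · have := hsub h; rw [mem_range] at this; omega
        · rcases hx1 with h | h
          · have := hsub hx; rw [mem_range] at this; omega
          · exact hcond x hx h
      · rw [Finset.card_insert_of_notMem hnot, hcard]
    · rintro s hs
      simp only [mem_filter] at hs
      exact Finset.insert_erase hs.2
    · rintro s hs
      simp only [mem_filter, mem_powerset] at hs
      have hnot : (n+1) ∉ s := fun h => by have := hs.1 h; rw [mem_range] at this; omega
      exact Finset.erase_insert hnot
  have h0 : Tcnt (n+2) (k+1) = (((Finset.range (n+2)).powerset.filter P)).card := rfl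
  omega

lemma Tcnt_eq_choose (n : ℕ) : ∀ k, Tcnt n k = (n + 1 - k).choose k := by
  induction n using Nat.strong_induction_on with
  | _ n ih =>
    intro k
    match n, k with
    | 0, 0 => simpa using Tcnt_zero 0
    | 0, (k+1) => rw [Tcnt_big (by omega)]; rw [Nat.choose_eq_zero_of_lt (by omega)]
    | 1, 0 => simpa using Tcnt_zero 1
    | 1, 1 => decide
    | 1, (k+2) => rw [Tcnt_big (by omega)]; rw [Nat.choose_eq_zero_of_lt (by omega)]
    | (n+2), 0 => simpa using Tcnt_zero (n+2)
    | (n+2), (k+1) =>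
      rw [Tcnt_rec, ih (n+1) (by omega) (k+1), ih n (by omega) k]
      rcases le_or_gt (k+1) (n+2) with h | h
      · have e1 : n + 2 + 1 - (k+1) = (n + 1 + 1 - (k+1)) + 1 := by omega
        have e2 : n + 1 - k = n + 1 + 1 - (k+1) := by omega
        rw [e1, e2, Nat.choose_succ_succ']
        exact Nat.add_comm _ _
      · rw [Nat.choose_eq_zero_of_lt (by omega), Nat.choose_eq_zero_of_lt (by omega),
          Nat.choose_eq_zero_of_lt (by omega)]

open Polynomial

open Classical in
/-- The independence polynomial of a finite simple graph. -/
noncomputable def indepPoly {V : Type} [Fintype V] (G : SimpleGraph V) : Polynomial ℕ :=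
  ∑ s : Finset V, if (∀ i ∈ s, ∀ j ∈ s, ¬ G.Adj i j) then (X : Polynomial ℕ) ^ s.card else 0

/-- `i` is the mode of the coefficient sequence of `p` (convention: coefficient `-1` is `0`):
`a_{i-1} < a_i ≥ a_{i+1} ≥ ⋯`. -/
def PolyIsMode (p : Polynomial ℕ) (i : ℕ) : Prop :=
  (i = 0 → 0 < p.coeff 0) ∧ (∀ k, i = k + 1 → p.coeff k < p.coeff (k + 1)) ∧
    (∀ j, i ≤ j → p.coeff (j + 1) ≤ p.coeff j)

open Classical in
lemma indepPoly_coeff {V : Type} [Fintype V] (G : SimpleGraph V) (k : ℕ) :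
    (indepPoly G).coeff k
      = (Finset.univ.filter fun s : Finset V =>
          (∀ i ∈ s, ∀ j ∈ s, ¬ G.Adj i j) ∧ s.card = k).card := by
  classical
  unfold indepPoly
  rw [Polynomial.finset_sum_coeff, Finset.card_filter]
  refine Finset.sum_congr rfl fun s _ => ?_
  by_cases hP : (∀ i ∈ s, ∀ j ∈ s, ¬ G.Adj i j)
  · rw [if_pos hP, Polynomial.coeff_X_pow]
    by_cases hc : s.card = k
    · rw [if_pos hc.symm, if_pos ⟨hP, hc⟩]
    · rw [if_neg (fun h => hc h.symm), if_neg (fun h => hc h.2)]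
  · rw [if_neg hP, if_neg (fun h => hP h.1), Polynomial.coeff_zero]

open Classical in
lemma card_indep_fin (n k : ℕ) :
    (Finset.univ.filter fun s : Finset (Fin n) =>
      (∀ i ∈ s, ∀ j ∈ s, ¬ (SimpleGraph.pathGraph n).Adj i j) ∧ s.card = k).card
      = Tcnt n k := by
  classical
  unfold Tcnt
  refine Finset.card_bij (fun s _ => s.map ⟨Fin.val, Fin.val_injective⟩) ?_ ?_ ?_
  · intro s hs
    simp only [Finset.mem_filter, Finset.mem_univ, true_and] at hs
    obtain ⟨hind, hcard⟩ := hs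
    simp only [Finset.mem_filter, Finset.mem_powerset]
    refine ⟨?_, ?_, ?_⟩
    · intro x hx
      simp only [Finset.mem_map, Function.Embedding.coeFn_mk] at hx
      obtain ⟨i, _, rfl⟩ := hx
      exact Finset.mem_range.mpr i.isLt
    · intro x hx hx1
      simp only [Finset.mem_map, Function.Embedding.coeFn_mk] at hx hx1
      obtain ⟨i, hi, rfl⟩ := hx
      obtain ⟨j, hj, hij⟩ := hx1
      exact hind i hi j hj (SimpleGraph.pathGraph_adj.mpr (Or.inl hij.symm))
    · rw [Finset.card_map, hcard]
  · intro s1 h1 s2 h2 he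
    exact Finset.map_injective _ he
  · intro t ht
    simp only [Finset.mem_filter, Finset.mem_powerset] at ht
    obtain ⟨hsub, hcond, hcard⟩ := ht
    have hlt : ∀ m ∈ t, m < n := fun m hm => Finset.mem_range.mp (hsub hm)
    refine ⟨t.attachFin hlt, ?_, ?_⟩
    · simp only [Finset.mem_filter, Finset.mem_univ, true_and]
      constructor
      · intro i hi j hj hadj
        rw [Finset.mem_attachFin] at hi hj
        rw [SimpleGraph.pathGraph_adj] at hadj
        rcases hadj with h | h
        · exact hcond _ hi (by rwa [h])
        · exact hcond _ hj (by rwa [h])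
      · rw [Finset.card_attachFin, hcard]
    · ext x
      simp only [Finset.mem_map, Function.Embedding.coeFn_mk]
      constructor
      · rintro ⟨i, hi, rfl⟩
        exact (Finset.mem_attachFin hlt).mp hi
      · intro hx
        exact ⟨⟨x, hlt x hx⟩, (Finset.mem_attachFin hlt).mpr hx, rfl⟩

lemma indepPoly_path_coeff (n k : ℕ) :
    (indepPoly (SimpleGraph.pathGraph n)).coeff k = (n + 1 - k).choose k := by
  rw [indepPoly_coeff]
  have h := card_indep_fin n k
  rw [Tcnt_eq_choose] at h
  convert h using 2
  exact congrArg (fun d => @Finset.filter _ _ d Finset.univ) (Subsingleton.elim _ _)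

/-- the candidate mode -/
noncomputable def muMode (m : ℕ) : ℕ := Nat.find (Dcond_exists m)

lemma Dcond_of_le {m j : ℕ} (hj : muMode m ≤ j) : Dcond m j := by
  induction j, hj using Nat.le_induction with
  | base => exact Nat.find_spec (Dcond_exists m)
  | succ j hj ih => exact Dcond_step ih

lemma mode_mu (n : ℕ) : PolyIsMode (indepPoly (SimpleGraph.pathGraph n)) (muMode (n+1)) := by
  refine ⟨?_, ?_, ?_⟩
  · intro _
    rw [indepPoly_path_coeff]
    simp
  · intro k hk
    have hk' : k < Nat.find (Dcond_exists (n+1)) := by unfold muMode at hk; omega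
    have hnot : ¬ Dcond (n+1) k := Nat.find_min (Dcond_exists (n+1)) hk'
    rw [indepPoly_path_coeff, indepPoly_path_coeff]
    have e : n + 1 - (k+1) = n + 1 - k - 1 := by omega
    rw [e]
    by_contra hle
    push_neg at hle
    exact hnot ((dec_iff (n+1) k).mp hle)
  · intro j hj
    have hD : Dcond (n+1) j := Dcond_of_le hj
    rw [indepPoly_path_coeff, indepPoly_path_coeff]
    have e : n + 1 - (j+1) = n + 1 - j - 1 := by omega
    rw [e]
    exact (dec_iff (n+1) j).mpr hD

lemma mode_lt_absurd {p : Polynomial ℕ} {i j : ℕ} (hi : PolyIsMode p i)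
    (hj : PolyIsMode p j) (hij : i < j) : False := by
  obtain ⟨-, hj2, -⟩ := hj
  obtain ⟨-, -, hi3⟩ := hi
  have h1 : p.coeff (j-1) < p.coeff ((j-1)+1) := hj2 (j-1) (by omega)
  have h2 : p.coeff ((j-1)+1) ≤ p.coeff (j-1) := hi3 (j-1) (by omega)
  omega

lemma mode_unique {p : Polynomial ℕ} {i j : ℕ} (hi : PolyIsMode p i)
    (hj : PolyIsMode p j) : i = j := by
  rcases lt_trichotomy i j with h | h | h
  · exact absurd (mode_lt_absurd hi hj h) (by simp)
  · exact h
  · exact absurd (mode_lt_absurd hj hi h) (by simp)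

/-- The modes `λ_n` of the independence polynomials of paths satisfy
`λ_n ≤ λ_{n+1} ≤ λ_n + 1`. -/
theorem path_mode_monotone (n : ℕ) (hn : 1 ≤ n) (l l' : ℕ)
    (hl : PolyIsMode (indepPoly (SimpleGraph.pathGraph n)) l)
    (hl' : PolyIsMode (indepPoly (SimpleGraph.pathGraph (n + 1))) l') :
    l ≤ l' ∧ l' ≤ l + 1 := by
  have e1 : l = muMode (n+1) := mode_unique hl (mode_mu n)
  have e2 : l' = muMode (n+2) := mode_unique hl' (mode_mu (n+1))
  subst e1 e2
  constructor
  · exact Nat.find_le (Dcond_up (Nat.find_spec (Dcond_exists (n+2))))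
  · exact Nat.find_le (Dcond_diag (Nat.find_spec (Dcond_exists (n+1))))
end

section
/- The independence polynomial of the lollipop graph L_{m,n} equals I(P_n;t) + m·t·I(P_{n−1};t) + (m−1)·t²·I(P_{n−2};t) for n ≥ 2, where I(P_k;t) is the independence polynomial of the path on k vertices. -/
open Polynomial

/-- The lollipop graph `L_{m,n}`: a complete graph `K_m` (on `Fin m`) joined to a path
`P_n` (on `Fin n`) by a bridge between the vertex `m-1` of `K_m` and the endpoint `0`
of the path. -/
def lollipop (m n : ℕ) : SimpleGraph (Fin m ⊕ Fin n) :=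
  SimpleGraph.fromRel (fun x y =>
    match x, y with
    | Sum.inl _, Sum.inl _ => True
    | Sum.inr i, Sum.inr j => (j : ℕ) = (i : ℕ) + 1
    | Sum.inl i, Sum.inr j => (i : ℕ) = m - 1 ∧ (j : ℕ) = 0
    | Sum.inr _, Sum.inl _ => False)

open Classical in
/-- Sum over "no two consecutive" subsets of `range n` satisfying an extra predicate `p`. -/
noncomputable def pathSum (n : ℕ) (p : Finset ℕ → Prop) : Polynomial ℕ :=
  ∑ s ∈ (Finset.range n).powerset,
    if ((∀ i ∈ s, i + 1 ∉ s) ∧ p s) then (X : Polynomial ℕ) ^ s.card else 0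

open Classical in
lemma transportFin (n : ℕ) (f : Finset ℕ → Polynomial ℕ) :
    ∑ b : Finset (Fin n), f (b.map Fin.valEmbedding)
      = ∑ s ∈ (Finset.range n).powerset, f s := by
  refine Finset.sum_bij' (fun b _ => b.map Fin.valEmbedding)
    (fun s hs => s.attachFin (fun m hm => Finset.mem_range.mp (Finset.mem_powerset.mp hs hm)))
    ?_ ?_ ?_ ?_ ?_
  · intro b _
    simp only [Finset.mem_powerset]
    intro x hx
    simp only [Finset.mem_map, Fin.valEmbedding_apply] at hx
    obtain ⟨y, _, rfl⟩ := hx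
    simp [y.isLt]
  · intro s hs; exact Finset.mem_univ _
  · intro b _
    ext x
    simp only [Finset.mem_attachFin, Finset.mem_map, Fin.valEmbedding_apply]
    exact ⟨fun ⟨a, ha, e⟩ => Fin.val_injective e ▸ ha, fun h => ⟨x, h, rfl⟩⟩
  · intro s hs
    ext x
    simp only [Finset.mem_map, Fin.valEmbedding_apply]
    constructor
    · rintro ⟨y, hy, rfl⟩
      simpa [Finset.mem_attachFin] using hy
    · intro hx
      exact ⟨⟨x, Finset.mem_range.mp (Finset.mem_powerset.mp hs hx)⟩,
        by simp [Finset.mem_attachFin, hx]⟩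
  · intro b _; rfl

open Classical in
lemma indep_path_iff (n : ℕ) (b : Finset (Fin n)) :
    (∀ i ∈ b, ∀ j ∈ b, ¬ (SimpleGraph.pathGraph n).Adj i j)
      ↔ (∀ i ∈ b.map Fin.valEmbedding, i + 1 ∉ b.map Fin.valEmbedding) := by
  constructor
  · intro h i hi hi1
    simp only [Finset.mem_map, Fin.valEmbedding_apply] at hi hi1
    obtain ⟨a, ha, rfl⟩ := hi
    obtain ⟨c, hc, hac⟩ := hi1
    exact h a ha c hc (SimpleGraph.pathGraph_adj.mpr (Or.inl hac.symm))
  · intro h i hi j hj hadj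
    rcases SimpleGraph.pathGraph_adj.mp hadj with he | he
    · refine h (i : ℕ) (by simp only [Finset.mem_map, Fin.valEmbedding_apply]; exact ⟨i, hi, rfl⟩) ?_
      rw [he]
      simp only [Finset.mem_map, Fin.valEmbedding_apply]
      exact ⟨j, hj, rfl⟩
    · refine h (j : ℕ) (by simp only [Finset.mem_map, Fin.valEmbedding_apply]; exact ⟨j, hj, rfl⟩) ?_
      rw [he]
      simp only [Finset.mem_map, Fin.valEmbedding_apply]
      exact ⟨i, hi, rfl⟩

open Classical in
lemma sum_fin_eq_pathSum (n : ℕ) (p : Finset ℕ → Prop) :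
    (∑ b : Finset (Fin n),
      if ((∀ i ∈ b, ∀ j ∈ b, ¬ (SimpleGraph.pathGraph n).Adj i j) ∧ p (b.map Fin.valEmbedding))
        then (X : Polynomial ℕ) ^ b.card else 0)
      = pathSum n p := by
  rw [pathSum,
    ← transportFin n (fun s => if ((∀ i ∈ s, i + 1 ∉ s) ∧ p s) then (X : Polynomial ℕ) ^ s.card else 0)]
  refine Finset.sum_congr rfl fun b _ => ?_
  exact if_congr (and_congr (indep_path_iff n b) Iff.rfl) (by rw [Finset.card_map]) rfl

open Classical in
lemma indepPoly_path_eq_pathSum (n : ℕ) :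
    indepPoly (SimpleGraph.pathGraph n) = pathSum n (fun _ => True) := by
  rw [← sum_fin_eq_pathSum n (fun _ => True), indepPoly]
  refine Finset.sum_congr rfl fun b _ => ?_
  simp

open Classical in
lemma pathSum_notMem_aux (k : ℕ) :
    ∑ s ∈ (Finset.range (k + 1)).powerset.filter
        (fun s => (∀ i ∈ s, i + 1 ∉ s) ∧ 0 ∉ s), (X : Polynomial ℕ) ^ s.card
      = ∑ s ∈ (Finset.range k).powerset.filter
        (fun s => (∀ i ∈ s, i + 1 ∉ s) ∧ True), (X : Polynomial ℕ) ^ s.card := by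
  refine Finset.sum_bij' (fun s _ => s.image (· - 1)) (fun t _ => t.image (· + 1))
    ?_ ?_ ?_ ?_ ?_
  · intro s hs
    simp only [Finset.mem_filter, Finset.mem_powerset] at hs ⊢
    obtain ⟨hsub, hnc, h0⟩ := hs
    refine ⟨?_, ?_, trivial⟩
    · intro x hx
      obtain ⟨a, ha, rfl⟩ := Finset.mem_image.mp hx
      have h1 : a < k + 1 := Finset.mem_range.mp (hsub ha)
      have h2 : a ≠ 0 := fun e => h0 (e ▸ ha)
      exact Finset.mem_range.mpr (by omega)
    · intro y hy hy1
      obtain ⟨a, ha, rfl⟩ := Finset.mem_image.mp hy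
      obtain ⟨c, hc, hac⟩ := Finset.mem_image.mp hy1
      have h2 : a ≠ 0 := fun e => h0 (e ▸ ha)
      have h3 : c ≠ 0 := fun e => h0 (e ▸ hc)
      have : c = a + 1 := by omega
      exact hnc a ha (this ▸ hc)
  · intro t ht
    simp only [Finset.mem_filter, Finset.mem_powerset] at ht ⊢
    obtain ⟨hsub, hnc, -⟩ := ht
    refine ⟨?_, ?_, ?_⟩
    · intro x hx
      obtain ⟨a, ha, rfl⟩ := Finset.mem_image.mp hx
      have : a < k := Finset.mem_range.mp (hsub ha)
      exact Finset.mem_range.mpr (by omega)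
    · intro y hy hy1
      obtain ⟨a, ha, rfl⟩ := Finset.mem_image.mp hy
      obtain ⟨c, hc, hac⟩ := Finset.mem_image.mp hy1
      have : c = a + 1 := by omega
      exact hnc a ha (this ▸ hc)
    · intro h0
      obtain ⟨a, _, ha⟩ := Finset.mem_image.mp h0
      omega
  · intro s hs
    simp only [Finset.mem_filter, Finset.mem_powerset] at hs
    obtain ⟨hsub, hnc, h0⟩ := hs
    rw [Finset.image_image]
    have : ∀ a ∈ s, (Function.comp (· + 1) (· - 1)) a = id a := by
      intro a ha
      have : a ≠ 0 := fun e => h0 (e ▸ ha)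
      simp only [Function.comp_apply, id_eq]
      omega
    rw [Finset.image_congr this, Finset.image_id]
  · intro t ht
    rw [Finset.image_image]
    have : ∀ a ∈ t, (Function.comp (· - 1) (· + 1)) a = id a := by
      intro a ha
      simp only [Function.comp_apply, id_eq]
      omega
    rw [Finset.image_congr this, Finset.image_id]
  · intro s hs
    simp only [Finset.mem_filter, Finset.mem_powerset] at hs
    obtain ⟨hsub, hnc, h0⟩ := hs
    rw [Finset.card_image_of_injOn]
    intro a ha c hc h
    dsimp only at h
    have h2 : a ≠ 0 := fun e => h0 (e ▸ ha)
    have h3 : c ≠ 0 := fun e => h0 (e ▸ hc)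
    omega

open Classical in
lemma pathSum_mem_aux (k : ℕ) :
    ∑ s ∈ (Finset.range (k + 2)).powerset.filter
        (fun s => (∀ i ∈ s, i + 1 ∉ s) ∧ 0 ∈ s), (X : Polynomial ℕ) ^ s.card
      = ∑ s ∈ (Finset.range k).powerset.filter
        (fun s => (∀ i ∈ s, i + 1 ∉ s) ∧ True), X * (X : Polynomial ℕ) ^ s.card := by
  refine Finset.sum_bij' (fun s _ => (s.erase 0).image (· - 2))
    (fun t _ => insert 0 (t.image (· + 2))) ?_ ?_ ?_ ?_ ?_
  · intro s hs
    simp only [Finset.mem_filter, Finset.mem_powerset] at hs ⊢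
    obtain ⟨hsub, hnc, h0⟩ := hs
    have h1 : (1 : ℕ) ∉ s := hnc 0 h0
    have hge : ∀ a ∈ s.erase 0, 2 ≤ a := by
      intro a ha
      have h2 := Finset.mem_of_mem_erase ha
      have h3 := Finset.ne_of_mem_erase ha
      have : a ≠ 1 := fun e => h1 (e ▸ h2)
      omega
    refine ⟨?_, ?_, trivial⟩
    · intro x hx
      obtain ⟨a, ha, rfl⟩ := Finset.mem_image.mp hx
      have := hge a ha
      have : a < k + 2 := Finset.mem_range.mp (hsub (Finset.mem_of_mem_erase ha))
      have := hge a ha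
      exact Finset.mem_range.mpr (by omega)
    · intro y hy hy1
      obtain ⟨a, ha, rfl⟩ := Finset.mem_image.mp hy
      obtain ⟨c, hc, hac⟩ := Finset.mem_image.mp hy1
      have ha2 := hge a ha
      have hc2 := hge c hc
      have : c = a + 1 := by omega
      exact hnc a (Finset.mem_of_mem_erase ha) (this ▸ Finset.mem_of_mem_erase hc)
  · intro t ht
    simp only [Finset.mem_filter, Finset.mem_powerset] at ht ⊢
    obtain ⟨hsub, hnc, -⟩ := ht
    refine ⟨?_, ?_, Finset.mem_insert_self 0 _⟩
    · intro x hx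
      rcases Finset.mem_insert.mp hx with rfl | hx
      · exact Finset.mem_range.mpr (by omega)
      · obtain ⟨a, ha, rfl⟩ := Finset.mem_image.mp hx
        have : a < k := Finset.mem_range.mp (hsub ha)
        exact Finset.mem_range.mpr (by omega)
    · intro y hy hy1
      rcases Finset.mem_insert.mp hy1 with h | h
      · omega
      obtain ⟨c, hc, hac⟩ := Finset.mem_image.mp h
      rcases Finset.mem_insert.mp hy with rfl | hy
      · omega
      obtain ⟨a, ha, rfl⟩ := Finset.mem_image.mp hy
      have : c = a + 1 := by omega
      exact hnc a ha (this ▸ hc)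
  · intro s hs
    simp only [Finset.mem_filter, Finset.mem_powerset] at hs
    obtain ⟨hsub, hnc, h0⟩ := hs
    have h1 : (1 : ℕ) ∉ s := hnc 0 h0
    rw [Finset.image_image]
    ext x
    simp only [Finset.mem_insert, Finset.mem_image, Function.comp_apply, Finset.mem_erase]
    constructor
    · rintro (rfl | ⟨a, ⟨ha0, ha⟩, rfl⟩)
      · exact h0
      · have : a ≠ 1 := fun e => h1 (e ▸ ha)
        have : a - 2 + 2 = a := by omega
        rw [this]; exact ha
    · intro hx
      by_cases hx0 : x = 0
      · exact Or.inl hx0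
      · have hx1 : x ≠ 1 := fun e => h1 (e ▸ hx)
        exact Or.inr ⟨x, ⟨hx0, hx⟩, by omega⟩
  · intro t ht
    simp only [Finset.mem_filter, Finset.mem_powerset] at ht
    have h0 : (0 : ℕ) ∉ t.image (· + 2) := by
      intro h
      obtain ⟨a, _, ha⟩ := Finset.mem_image.mp h
      omega
    rw [Finset.erase_insert h0, Finset.image_image]
    have : ∀ a ∈ t, (Function.comp (· - 2) (· + 2)) a = id a := by
      intro a ha
      simp only [Function.comp_apply, id_eq]
      omega
    rw [Finset.image_congr this, Finset.image_id]
  · intro s hs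
    simp only [Finset.mem_filter, Finset.mem_powerset] at hs
    obtain ⟨hsub, hnc, h0⟩ := hs
    have h1 : (1 : ℕ) ∉ s := hnc 0 h0
    have hge : ∀ a ∈ s.erase 0, 2 ≤ a := by
      intro a ha
      have h2 := Finset.mem_of_mem_erase ha
      have h3 := Finset.ne_of_mem_erase ha
      have : a ≠ 1 := fun e => h1 (e ▸ h2)
      omega
    rw [Finset.card_image_of_injOn, Finset.card_erase_of_mem h0]
    · have hc : 1 ≤ s.card := Finset.card_pos.mpr ⟨0, h0⟩
      rw [← pow_succ']
      congr 1
      omega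
    · intro a ha c hc h
      dsimp only at h
      have := hge a ha
      have := hge c hc
      omega

open Classical in
lemma pathSum_notMem (k : ℕ) :
    pathSum (k + 1) (fun s => 0 ∉ s) = pathSum k (fun _ => True) := by
  have h := pathSum_notMem_aux k
  rw [Finset.sum_filter, Finset.sum_filter] at h
  unfold pathSum
  convert h using 2 <;> simp

open Classical in
lemma pathSum_mem (k : ℕ) :
    pathSum (k + 2) (fun s => 0 ∈ s) = X * pathSum k (fun _ => True) := by
  have h := pathSum_mem_aux k
  rw [Finset.sum_filter, Finset.sum_filter] at h
  unfold pathSum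
  rw [Finset.mul_sum]
  simp only [mul_ite, mul_zero]
  convert h using 2 <;> simp

open Classical in
lemma pathSum_rec (k : ℕ) :
    pathSum (k + 2) (fun _ => True)
      = pathSum (k + 1) (fun _ => True) + X * pathSum k (fun _ => True) := by
  rw [← pathSum_notMem (k + 1), ← pathSum_mem k]
  unfold pathSum
  rw [← Finset.sum_add_distrib]
  refine Finset.sum_congr rfl fun s _ => ?_
  by_cases h0 : (0 : ℕ) ∈ s <;> by_cases hnc : ∀ i ∈ s, i + 1 ∉ s <;> simp [h0, hnc]

lemma lollipop_adj_ll {m n : ℕ} (i j : Fin m) :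
    (lollipop m n).Adj (Sum.inl i) (Sum.inl j) ↔ i ≠ j := by
  simp [lollipop, SimpleGraph.fromRel_adj]

lemma lollipop_adj_rr {m n : ℕ} (i j : Fin n) :
    (lollipop m n).Adj (Sum.inr i) (Sum.inr j) ↔ (SimpleGraph.pathGraph n).Adj i j := by
  simp only [lollipop, SimpleGraph.fromRel_adj, SimpleGraph.pathGraph_adj, ne_eq,
    Sum.inr.injEq, Fin.ext_iff]
  omega

lemma lollipop_adj_lr {m n : ℕ} (i : Fin m) (j : Fin n) :
    (lollipop m n).Adj (Sum.inl i) (Sum.inr j) ↔ ((i : ℕ) = m - 1 ∧ (j : ℕ) = 0) := by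
  simp [lollipop, SimpleGraph.fromRel_adj]

lemma lollipop_adj_rl {m n : ℕ} (i : Fin n) (j : Fin m) :
    (lollipop m n).Adj (Sum.inr i) (Sum.inl j) ↔ ((j : ℕ) = m - 1 ∧ (i : ℕ) = 0) := by
  rw [SimpleGraph.adj_comm]
  exact lollipop_adj_lr j i

lemma lollipop_indep_iff (m n : ℕ) (a : Finset (Fin m)) (b : Finset (Fin n)) :
    (∀ x ∈ a.disjSum b, ∀ y ∈ a.disjSum b, ¬ (lollipop m n).Adj x y)
    ↔ ((∀ i ∈ a, ∀ j ∈ a, i = j)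
       ∧ (∀ i ∈ b, ∀ j ∈ b, ¬ (SimpleGraph.pathGraph n).Adj i j)
       ∧ (∀ i ∈ a, ∀ j ∈ b, ¬ ((i : ℕ) = m - 1 ∧ (j : ℕ) = 0))) := by
  constructor
  · intro h
    refine ⟨?_, ?_, ?_⟩
    · intro i hi j hj
      by_contra hne
      exact h _ (Finset.inl_mem_disjSum.mpr hi) _ (Finset.inl_mem_disjSum.mpr hj)
        ((lollipop_adj_ll i j).mpr hne)
    · intro i hi j hj hadj
      exact h _ (Finset.inr_mem_disjSum.mpr hi) _ (Finset.inr_mem_disjSum.mpr hj)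
        ((lollipop_adj_rr i j).mpr hadj)
    · intro i hi j hj hc
      exact h _ (Finset.inl_mem_disjSum.mpr hi) _ (Finset.inr_mem_disjSum.mpr hj)
        ((lollipop_adj_lr i j).mpr hc)
  · rintro ⟨h1, h2, h3⟩ x hx y hy hadj
    rcases Finset.mem_disjSum.mp hx with ⟨i, hi, rfl⟩ | ⟨i, hi, rfl⟩ <;>
      rcases Finset.mem_disjSum.mp hy with ⟨j, hj, rfl⟩ | ⟨j, hj, rfl⟩
    · exact ((lollipop_adj_ll i j).mp hadj) (h1 i hi j hj)
    · exact h3 i hi j hj ((lollipop_adj_lr i j).mp hadj)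
    · exact h3 j hj i hi ((lollipop_adj_rl i j).mp hadj)
    · exact h2 i hi j hj ((lollipop_adj_rr i j).mp hadj)

open Classical in
noncomputable def gLol (m n : ℕ) (a : Finset (Fin m)) : Polynomial ℕ :=
  ∑ b : Finset (Fin n),
    @ite _ ((∀ i ∈ a, ∀ j ∈ a, i = j)
       ∧ (∀ i ∈ b, ∀ j ∈ b, ¬ (SimpleGraph.pathGraph n).Adj i j)
       ∧ (∀ i ∈ a, ∀ j ∈ b, ¬ ((i : ℕ) = m - 1 ∧ (j : ℕ) = 0)))
    (Classical.propDecidable _) ((X : Polynomial ℕ) ^ (a.card + b.card)) 0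

theorem myIfCongr {α : Sort*} {b c : Prop} {ib : Decidable b} {ic : Decidable c}
    {x u y v : α} (h : b ↔ c) (hx : x = u) (hy : y = v) :
    @ite _ b ib x y = @ite _ c ic u v := by
  subst hx; subst hy
  have e : b = c := propext h
  subst e
  rw [Subsingleton.elim ib ic]

theorem myIfNeg {α : Sort*} {c : Prop} {ic : Decidable c} (h : ¬c) (x y : α) :
    @ite _ c ic x y = y := by
  cases ic with
  | isTrue ht => exact absurd ht h
  | isFalse _ => rfl

noncomputable def FLol (m n : ℕ) (u : Finset (Fin m ⊕ Fin n)) : Polynomial ℕ :=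
  @ite _ (∀ i ∈ u, ∀ j ∈ u, ¬ (lollipop m n).Adj i j)
    (Classical.propDecidable _) ((X : Polynomial ℕ) ^ u.card) 0

lemma indepPoly_lollipop_eq_sum_FLol (m n : ℕ) :
    indepPoly (lollipop m n) = ∑ u : Finset (Fin m ⊕ Fin n), FLol m n u := by
  rw [indepPoly]
  exact Finset.sum_congr rfl fun u _ => by rw [FLol]; exact myIfCongr Iff.rfl rfl rfl

open Classical in
lemma indepPoly_lollipop_decomp (m n : ℕ) :
    indepPoly (lollipop m n) = ∑ a : Finset (Fin m), gLol m n a := by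
  have step : ∑ u : Finset (Fin m ⊕ Fin n), FLol m n u
      = ∑ a : Finset (Fin m), ∑ b : Finset (Fin n), FLol m n (a.disjSum b) := by
    rw [← Finset.sum_product']
    refine Finset.sum_bij' (fun u _ => (u.toLeft, u.toRight))
      (fun p _ => p.1.disjSum p.2) (fun u _ => Finset.mem_univ _) (fun p _ => Finset.mem_univ _)
      ?_ ?_ ?_
    · intro u _
      exact Finset.toLeft_disjSum_toRight
    · intro p _
      simp
    · intro u _
      exact congrArg (FLol m n) Finset.toLeft_disjSum_toRight.symm
  rw [indepPoly_lollipop_eq_sum_FLol, step]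
  refine Finset.sum_congr rfl fun a _ => ?_
  rw [gLol]
  refine Finset.sum_congr rfl fun b _ => ?_
  rw [FLol]
  exact myIfCongr (lollipop_indep_iff m n a b) (by rw [Finset.card_disjSum]) rfl

open Classical in
lemma gLol_eq_zero (m n : ℕ) (a : Finset (Fin m)) (h : 2 ≤ a.card) : gLol m n a = 0 := by
  obtain ⟨i, hi, j, hj, hne⟩ := Finset.one_lt_card.mp h
  exact Finset.sum_eq_zero fun b _ => myIfNeg (fun hc => hne (hc.1 i hi j hj)) _ _

open Classical in
lemma gLol_empty (m n : ℕ) : gLol m n ∅ = pathSum n (fun _ => True) := by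
  rw [← sum_fin_eq_pathSum n (fun _ => True), gLol]
  refine Finset.sum_congr rfl fun b _ => ?_
  simp

open Classical in
lemma gLol_singleton_ne (m n : ℕ) (i : Fin m) (h : (i : ℕ) ≠ m - 1) :
    gLol m n {i} = X * pathSum n (fun _ => True) := by
  rw [← sum_fin_eq_pathSum n (fun _ => True), gLol, Finset.mul_sum]
  simp only [mul_ite, mul_zero]
  refine Finset.sum_congr rfl fun b _ => ?_
  refine myIfCongr ?_ (by rw [Finset.card_singleton, ← pow_succ', Nat.add_comm]) rfl
  simp only [Finset.mem_singleton, and_true]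
  constructor
  · rintro ⟨-, h2, -⟩
    exact h2
  · intro h2
    exact ⟨fun i hi j hj => hi.trans hj.symm, h2, fun x hx j hj hc => h (hx ▸ hc.1)⟩

open Classical in
lemma gLol_singleton_eq (m n : ℕ) (i : Fin m) (h : (i : ℕ) = m - 1) :
    gLol m n {i} = X * pathSum n (fun s => 0 ∉ s) := by
  rw [← sum_fin_eq_pathSum n (fun s => 0 ∉ s), gLol, Finset.mul_sum]
  simp only [mul_ite, mul_zero]
  refine Finset.sum_congr rfl fun b _ => ?_
  refine myIfCongr ?_ (by rw [Finset.card_singleton, ← pow_succ', Nat.add_comm]) rfl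
  simp only [Finset.mem_singleton]
  constructor
  · rintro ⟨-, h2, h3⟩
    refine ⟨h2, fun h0 => ?_⟩
    simp only [Finset.mem_map, Fin.valEmbedding_apply] at h0
    obtain ⟨j, hj, hj0⟩ := h0
    exact h3 i rfl j hj ⟨h, hj0⟩
  · rintro ⟨h2, h0⟩
    refine ⟨fun i hi j hj => hi.trans hj.symm, h2, ?_⟩
    rintro x rfl j hj ⟨-, hj0⟩
    exact h0 (by simp only [Finset.mem_map, Fin.valEmbedding_apply]; exact ⟨j, hj, hj0⟩)

open Classical in
lemma sum_gLol (m n : ℕ) (hm : 1 ≤ m) :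
    ∑ a : Finset (Fin m), gLol m n a
      = pathSum n (fun _ => True)
        + ((m - 1) • (X * pathSum n (fun _ => True)) + X * pathSum n (fun s => 0 ∉ s)) := by
  have hzero : ∀ a ∈ (Finset.univ : Finset (Finset (Fin m))),
      a ∉ insert ∅ (Finset.univ.image fun i : Fin m => ({i} : Finset (Fin m))) →
        gLol m n a = 0 := by
    intro a _ ha
    refine gLol_eq_zero m n a ?_
    by_contra hlt
    push_neg at hlt
    have hcard : a.card ≤ 1 := by omega
    rcases Nat.le_one_iff_eq_zero_or_eq_one.mp hcard with h | h
    · exact ha (by simp [Finset.card_eq_zero.mp h])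
    · obtain ⟨x, rfl⟩ := Finset.card_eq_one.mp h
      exact ha (Finset.mem_insert_of_mem (Finset.mem_image.mpr ⟨x, Finset.mem_univ x, rfl⟩))
  rw [← Finset.sum_subset (Finset.subset_univ _) hzero,
    Finset.sum_insert (by
      intro h
      obtain ⟨i, -, hi⟩ := Finset.mem_image.mp h
      exact Finset.singleton_ne_empty i hi),
    Finset.sum_image (by
      intro i _ j _ h
      exact Finset.singleton_inj.mp h),
    gLol_empty]
  congr 1
  set last : Fin m := ⟨m - 1, by omega⟩ with hlast
  rw [← Finset.sum_erase_add Finset.univ _ (Finset.mem_univ last)]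
  congr 1
  · rw [Finset.sum_congr rfl (fun i hi => gLol_singleton_ne m n i (fun hv =>
      (Finset.ne_of_mem_erase hi) (Fin.ext hv))),
      Finset.sum_const, Finset.card_erase_of_mem (Finset.mem_univ last),
      Finset.card_univ, Fintype.card_fin]
  · exact gLol_singleton_eq m n last rfl

/-- `I(L_{m,n};t) = I(P_n;t) + m·t·I(P_{n-1};t) + (m-1)·t²·I(P_{n-2};t)` for `n ≥ 2`. -/
theorem indepPoly_lollipop_formula (m n : ℕ) (hm : 1 ≤ m) (hn : 2 ≤ n) :
    indepPoly (lollipop m n) =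
      indepPoly (SimpleGraph.pathGraph n)
        + (m : Polynomial ℕ) * X * indepPoly (SimpleGraph.pathGraph (n - 1))
        + ((m - 1 : ℕ) : Polynomial ℕ) * X ^ 2 * indepPoly (SimpleGraph.pathGraph (n - 2)) := by
  obtain ⟨k, rfl⟩ : ∃ k, n = k + 2 := ⟨n - 2, by omega⟩
  rw [indepPoly_lollipop_decomp, sum_gLol m (k + 2) hm,
    show k + 2 - 1 = k + 1 from rfl, show k + 2 - 2 = k from rfl,
    indepPoly_path_eq_pathSum, indepPoly_path_eq_pathSum, indepPoly_path_eq_pathSum,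
    pathSum_notMem (k + 1), pathSum_rec k, nsmul_eq_mul]
  have hc : ((m : ℕ) : Polynomial ℕ) = ((m - 1 : ℕ) : Polynomial ℕ) + 1 := by
    rw [congrArg (Nat.cast : ℕ → Polynomial ℕ) (show m = (m - 1) + 1 by omega),
      Nat.cast_add, Nat.cast_one]
  rw [hc]
  ring
end

section
/- For all m, n ≥ 1, the mode η_{m,n} of the independence polynomial of the lollipop graph L_{m,n} satisfies η_{m,n} ∈ {λ_n, λ_n + 1}, where λ_n is the mode of the independence polynomial of the path P_n. -/
open Polynomial

/-!
An independent set of `L_{m,n}` contains at most one clique vertex, and only the bridge vertex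
excludes the first path vertex. So, with `a_k = C(n+1-k, k)` and `c_k = C(n-k, k)` the numbers of
independent `k`-sets of `P_n` and `P_{n-1}`, the lollipop has `a_{k+1} + (m-1) a_k + c_k`
independent `(k+1)`-sets. Writing `n = 2k+1+c`, `a_k < a_{k+1}` iff
`(k+1)(k+2+c) < (c+1)(c+2)`; this criterion is monotone in `k` and in `n`, so `a` and `c` still
rise just below `λ_n` and both are non-increasing from `λ_n` on. Hence the lollipop coefficients
rise into index `λ_n` and are non-increasing from `λ_n + 1` on.
-/

lemma PolyIsMode.lt_of_coeff_lt {p : ℕ[X]} {e j : ℕ} (he : PolyIsMode p e)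
    (hj : p.coeff j < p.coeff (j + 1)) : j < e :=
  not_le.1 fun hej => (he.2.2 j hej).not_gt hj

lemma PolyIsMode.le_of_coeff_succ_le {p : ℕ[X]} {e s : ℕ} (he : PolyIsMode p e)
    (hs : ∀ j, s ≤ j → p.coeff (j + 1) ≤ p.coeff j) : e ≤ s := by
  by_contra! hse
  obtain ⟨j, rfl⟩ : ∃ j, e = j + 1 := ⟨e - 1, by omega⟩
  exact (hs j (by omega)).not_gt (he.2.1 j rfl)

open Finset

def IsSparse (s : Finset ℕ) : Prop := ∀ i ∈ s, i + 1 ∉ s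

instance : DecidablePred IsSparse := fun s => by unfold IsSparse; infer_instance

def sparseSubsets (a b k : ℕ) : Finset (Finset ℕ) :=
  {s ∈ (Ico a b).powerset | IsSparse s ∧ #s = k}

lemma mem_sparseSubsets {a b k : ℕ} {s : Finset ℕ} :
    s ∈ sparseSubsets a b k ↔ (∀ x ∈ s, a ≤ x ∧ x < b) ∧ IsSparse s ∧ #s = k := by
  simp only [sparseSubsets, mem_filter, mem_powerset, subset_iff, mem_Ico]

lemma sparseSubsets_zero (a b : ℕ) : sparseSubsets a b 0 = {∅} := by
  ext s
  simp only [mem_sparseSubsets, card_eq_zero, mem_singleton]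
  exact ⟨fun h => h.2.2, by rintro rfl; simp [IsSparse]⟩

lemma sparseSubsets_succ_of_le {a b : ℕ} (h : b ≤ a) (k : ℕ) :
    sparseSubsets a b (k + 1) = ∅ := by
  rw [sparseSubsets, Ico_eq_empty_of_le h]
  ext s
  simp +contextual

lemma filter_notMem_sparseSubsets (a b k : ℕ) :
    {s ∈ sparseSubsets a b k | a ∉ s} = sparseSubsets (a + 1) b k := by
  ext s
  simp only [mem_filter, mem_sparseSubsets]
  constructor
  · rintro ⟨⟨hs, hsp, hk⟩, ha⟩
    exact ⟨fun x hx => ⟨lt_of_le_of_ne (hs x hx).1 (fun h => ha (h ▸ hx)), (hs x hx).2⟩,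
      hsp, hk⟩
  · rintro ⟨hs, hsp, hk⟩
    exact ⟨⟨fun x hx => ⟨by linarith [(hs x hx).1], (hs x hx).2⟩, hsp, hk⟩,
      fun ha => by linarith [(hs a ha).1]⟩

lemma card_filter_mem_sparseSubsets {a b : ℕ} (h : a < b) (k : ℕ) :
    #{s ∈ sparseSubsets a b (k + 1) | a ∈ s} = #(sparseSubsets (a + 2) b k) := by
  refine card_bij' (fun s _ => s.erase a) (fun s _ => insert a s) ?_ ?_ ?_ ?_
  · intro s hs
    simp only [mem_filter, mem_sparseSubsets] at hs ⊢
    obtain ⟨⟨hs, hsp, hk⟩, ha⟩ := hs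
    have ha1 : a + 1 ∉ s := hsp a ha
    refine ⟨fun x hx => ?_,
      fun i hi hi1 => hsp i (mem_of_mem_erase hi) (mem_of_mem_erase hi1), ?_⟩
    · have := hs x (mem_of_mem_erase hx)
      have : x ≠ a := ne_of_mem_erase hx
      have : x ≠ a + 1 := fun h => ha1 (h ▸ mem_of_mem_erase hx)
      omega
    · rw [card_erase_of_mem ha, hk, Nat.add_sub_cancel]
  · intro s hs
    simp only [mem_filter, mem_sparseSubsets] at hs ⊢
    obtain ⟨hs, hsp, hk⟩ := hs
    have ha : a ∉ s := fun ha => by linarith [(hs a ha).1]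
    refine ⟨⟨?_, ?_, by rw [card_insert_of_notMem ha, hk]⟩, mem_insert_self a s⟩
    · rintro x hx
      rcases mem_insert.1 hx with rfl | hx
      · exact ⟨le_rfl, h⟩
      · exact ⟨by linarith [(hs x hx).1], (hs x hx).2⟩
    · intro i hi hi1
      rcases mem_insert.1 hi with rfl | hi <;> rcases mem_insert.1 hi1 with hi1 | hi1
      · omega
      · linarith [(hs _ hi1).1]
      · linarith [(hs i hi).1]
      · exact hsp i hi hi1
  · intro s hs
    exact insert_erase (mem_filter.1 hs).2
  · intro s hs
    exact erase_insert fun ha => by linarith [((mem_sparseSubsets.1 hs).1 a ha).1]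

lemma card_sparseSubsets_succ {a b : ℕ} (h : a < b) (k : ℕ) :
    #(sparseSubsets a b (k + 1)) =
      #(sparseSubsets (a + 1) b (k + 1)) + #(sparseSubsets (a + 2) b k) := by
  rw [← card_filter_add_card_filter_not (p := (a ∈ ·)), add_comm,
    filter_notMem_sparseSubsets, card_filter_mem_sparseSubsets h]

theorem card_sparseSubsets (a b k : ℕ) : #(sparseSubsets a b k) = (b + 1 - a - k).choose k := by
  induction hd : b - a using Nat.strong_induction_on generalizing a k with
  | _ d ih =>
  rcases k with _ | k
  · simp [sparseSubsets_zero]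
  rcases le_or_gt b a with hba | hab
  · rw [sparseSubsets_succ_of_le hba, Nat.choose_eq_zero_of_lt (by omega), card_empty]
  rw [card_sparseSubsets_succ hab, ih (b - (a + 1)) (by omega) _ _ rfl,
    ih (b - (a + 2)) (by omega) _ _ rfl]
  rcases lt_or_ge k d with hk | hk
  · obtain ⟨e, he₁, he₂, he₃⟩ : ∃ e, b + 1 - (a + 1) - (k + 1) = e ∧
        b + 1 - (a + 2) - k = e ∧ b + 1 - a - (k + 1) = e + 1 :=
      ⟨d - k - 1, by omega, by omega, by omega⟩
    rw [he₁, he₂, he₃, Nat.choose_succ_succ', add_comm]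
  · rw [Nat.choose_eq_zero_of_lt (by omega), Nat.choose_eq_zero_of_lt (by omega),
      Nat.choose_eq_zero_of_lt (by omega)]

def pathCoeff (n k : ℕ) : ℕ := (n + 1 - k).choose k

lemma pathCoeff_mul_eq (k c : ℕ) :
    (k + 1) * (k + 2 + c) * pathCoeff (2 * k + 1 + c) (k + 1) =
      (c + 2) * (c + 1) * pathCoeff (2 * k + 1 + c) k := by
  have h₁ := Nat.choose_succ_right_eq (k + 1 + c) k
  have h₂ := Nat.choose_mul_succ_eq (k + 1 + c) k
  simp only [pathCoeff, show 2 * k + 1 + c + 1 - (k + 1) = k + 1 + c by omega,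
    show 2 * k + 1 + c + 1 - k = k + 1 + c + 1 by omega] at h₁ h₂ ⊢
  rw [show k + 1 + c - k = c + 1 by omega] at h₁
  rw [show k + 1 + c + 1 - k = c + 2 by omega] at h₂
  calc (k + 1) * (k + 2 + c) * (k + 1 + c).choose (k + 1)
      = (k + 2 + c) * ((k + 1 + c).choose (k + 1) * (k + 1)) := by ring
    _ = (c + 1) * ((k + 1 + c).choose k * (k + 1 + c + 1)) := by rw [h₁]; ring
    _ = (c + 2) * (c + 1) * (k + 1 + c + 1).choose k := by rw [h₂]; ring

lemma pathCoeff_lt_succ_iff (n k : ℕ) :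
    pathCoeff n k < pathCoeff n (k + 1) ↔
      ∃ c, n = 2 * k + 1 + c ∧ (k + 1) * (k + 2 + c) < (c + 2) * (c + 1) := by
  rcases lt_or_ge n (2 * k + 1) with hn | hn
  · have : pathCoeff n (k + 1) = 0 := Nat.choose_eq_zero_of_lt (by omega)
    simp only [this, Nat.not_lt_zero, false_iff, not_exists, not_and]
    omega
  obtain ⟨c, rfl⟩ := Nat.exists_eq_add_of_le hn
  have hx : 0 < pathCoeff (2 * k + 1 + c) k := Nat.choose_pos (by omega)
  have hy : 0 < pathCoeff (2 * k + 1 + c) (k + 1) := Nat.choose_pos (by omega)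
  have h := pathCoeff_mul_eq k c
  have hB : 0 < (c + 2) * (c + 1) := by positivity
  simp only [add_right_inj, exists_eq_left']
  generalize pathCoeff (2 * k + 1 + c) k = x, pathCoeff (2 * k + 1 + c) (k + 1) = y at *
  generalize (k + 1) * (k + 2 + c) = A, (c + 2) * (c + 1) = B at *
  constructor <;> intro hlt <;> by_contra! hge
  · nlinarith [Nat.mul_le_mul_right y hge, Nat.mul_lt_mul_of_pos_left hlt hB]
  · nlinarith [Nat.mul_le_mul_left A hge]

lemma pathCoeff_lt_succ_of_succ {n k : ℕ} (h : pathCoeff n (k + 1) < pathCoeff n (k + 2)) :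
    pathCoeff n k < pathCoeff n (k + 1) := by
  obtain ⟨c, rfl, hc⟩ := (pathCoeff_lt_succ_iff n (k + 1)).1 h
  exact (pathCoeff_lt_succ_iff _ k).2 ⟨c + 2, by ring, by nlinarith⟩

lemma pathCoeff_succ_lt_succ_of_lt {n k : ℕ} (h : pathCoeff n k < pathCoeff n (k + 1)) :
    pathCoeff (n + 1) k < pathCoeff (n + 1) (k + 1) := by
  obtain ⟨c, rfl, hc⟩ := (pathCoeff_lt_succ_iff n k).1 h
  refine (pathCoeff_lt_succ_iff _ k).2 ⟨c + 1, by ring, ?_⟩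
  -- for `k + 1 > 2 * c + 4` the hypothesis `hc` already fails
  rcases le_or_gt (k + 1) (2 * c + 4) with hk | hk
  · nlinarith
  · nlinarith [Nat.mul_le_mul (show 2 * c + 5 ≤ k + 1 by omega)
      (show 3 * c + 6 ≤ k + 2 + c by omega)]

lemma pathCoeff_lt_succ_of_succ_lt {n k : ℕ}
    (h : pathCoeff (n + 1) (k + 1) < pathCoeff (n + 1) (k + 2)) :
    pathCoeff n k < pathCoeff n (k + 1) := by
  obtain ⟨c, hn, hc⟩ := (pathCoeff_lt_succ_iff (n + 1) (k + 1)).1 h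
  exact (pathCoeff_lt_succ_iff n k).2 ⟨c + 1, by omega, by nlinarith⟩

lemma coeff_indepPoly {V : Type} [Fintype V] [DecidableEq V] (G : SimpleGraph V)
    [DecidableRel G.Adj] (k : ℕ) :
    (indepPoly G).coeff k =
      #{s : Finset V | (∀ i ∈ s, ∀ j ∈ s, ¬ G.Adj i j) ∧ #s = k} := by
  rw [indepPoly, finsetSum_coeff, card_filter]
  refine sum_congr rfl fun s _ => ?_
  split_ifs <;> simp_all [coeff_X_pow, eq_comm]

lemma coeff_zero_indepPoly {V : Type} [Fintype V] (G : SimpleGraph V) :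
    (indepPoly G).coeff 0 = 1 := by
  classical
  rw [coeff_indepPoly, card_eq_one]
  exact ⟨∅, by ext s; simp +contextual [card_eq_zero]⟩

lemma card_filter_map_valEmbedding (n : ℕ) (P : Finset ℕ → Prop) [DecidablePred P] :
    #{R : Finset (Fin n) | P (R.map Fin.valEmbedding)} = #{t ∈ (range n).powerset | P t} := by
  have hrange : range n = (univ : Finset (Fin n)).map Fin.valEmbedding := by simp [Nat.Iio_eq_range]
  refine card_bij (fun R _ => R.map Fin.valEmbedding) ?_ ?_ ?_
  · intro R hR
    simp only [mem_filter, mem_univ, true_and, mem_powerset] at hR ⊢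
    exact ⟨hrange ▸ map_subset_map.2 (subset_univ R), hR⟩
  · intro R _ R' _ h
    exact map_injective _ h
  · intro t ht
    simp only [mem_filter, mem_powerset] at ht
    obtain ⟨R, -, rfl⟩ := subset_map_iff.1 (hrange ▸ ht.1)
    exact ⟨R, by simpa using ht.2, rfl⟩

lemma isSparse_map_valEmbedding_iff {n : ℕ} (R : Finset (Fin n)) :
    IsSparse (R.map Fin.valEmbedding) ↔
      ∀ i ∈ R, ∀ j ∈ R, ¬((i : ℕ) + 1 = j ∨ (j : ℕ) + 1 = i) := by
  simp only [IsSparse, mem_map, Fin.valEmbedding_apply, not_or]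
  constructor
  · intro h i hi j hj
    exact ⟨fun hij => h i ⟨i, hi, rfl⟩ ⟨j, hj, hij.symm⟩,
      fun hji => h j ⟨j, hj, rfl⟩ ⟨i, hi, hji.symm⟩⟩
  · rintro h _ ⟨i, hi, rfl⟩ ⟨j, hj, hij⟩
    exact (h i hi j hj).1 hij.symm

lemma card_isSparse_map_valEmbedding (n k : ℕ) :
    #{R : Finset (Fin n) | IsSparse (R.map Fin.valEmbedding) ∧ #R = k} = pathCoeff n k := by
  calc #{R : Finset (Fin n) | IsSparse (R.map Fin.valEmbedding) ∧ #R = k}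
      = #(sparseSubsets 0 n k) := by
        have h := card_filter_map_valEmbedding n (fun t => IsSparse t ∧ #t = k)
        simp only [card_map] at h
        rw [h, sparseSubsets, ← range_eq_Ico]
    _ = pathCoeff n k := by rw [card_sparseSubsets, Nat.sub_zero, pathCoeff]

lemma card_isSparse_map_valEmbedding_of_zero_notMem (n k : ℕ) :
    #{R : Finset (Fin (n + 1)) | IsSparse (R.map Fin.valEmbedding) ∧ 0 ∉ R ∧ #R = k} =
      pathCoeff n k := by
  have h0 : ∀ R : Finset (Fin (n + 1)), 0 ∉ R ↔ 0 ∉ R.map Fin.valEmbedding := fun R => by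
    simp only [mem_map, Fin.valEmbedding_apply, Fin.val_eq_zero_iff, exists_eq_right]
  calc #{R : Finset (Fin (n + 1)) | IsSparse (R.map Fin.valEmbedding) ∧ 0 ∉ R ∧ #R = k}
      = #(sparseSubsets 1 (n + 1) k) := by
        have h := card_filter_map_valEmbedding (n + 1) (fun t => IsSparse t ∧ 0 ∉ t ∧ #t = k)
        simp only [card_map, ← h0] at h
        rw [h, sparseSubsets]
        congr 1
        ext t
        simp only [mem_filter, mem_powerset, subset_iff, mem_range, mem_Ico]
        constructor
        · rintro ⟨ht, hsp, h0, hk⟩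
          exact ⟨fun x hx => ⟨Nat.one_le_iff_ne_zero.2 fun h => h0 (h ▸ hx), ht hx⟩,
            hsp, hk⟩
        · rintro ⟨ht, hsp, hk⟩
          exact ⟨fun x hx => (ht hx).2, hsp, fun h => by simpa using (ht h).1, hk⟩
    _ = pathCoeff n k := by rw [card_sparseSubsets, pathCoeff, Nat.add_sub_cancel]

theorem coeff_indepPoly_pathGraph (n k : ℕ) :
    (indepPoly (SimpleGraph.pathGraph n)).coeff k = pathCoeff n k := by
  classical
  rw [coeff_indepPoly, ← card_isSparse_map_valEmbedding]
  simp only [SimpleGraph.pathGraph_adj, isSparse_map_valEmbedding_iff]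

lemma card_filter_eq_sum_disjSum {α β : Type*} [Fintype α] [Fintype β]
    (P : Finset (α ⊕ β) → Prop) [DecidablePred P] :
    #{u | P u} = ∑ L : Finset α, #{R : Finset β | P (L.disjSum R)} := by
  simp only [card_filter]
  rw [← Fintype.sum_prod_type', ← sumEquiv.toEquiv.symm.sum_comp]
  rfl

lemma sum_finset_eq_empty_add_sum_singleton {α M : Type*} [Fintype α] [DecidableEq α]
    [AddCommMonoid M] (f : Finset α → M) (hf : ∀ L, 1 < #L → f L = 0) :
    ∑ L, f L = f ∅ + ∑ a, f {a} := by
  rw [← sum_subset (subset_univ (insert ∅ (univ.map ⟨singleton, singleton_injective⟩))),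
    sum_insert (by simp), sum_map]
  · rfl
  · intro L _ hL
    apply hf
    simp only [mem_insert, mem_map, mem_univ, true_and, not_or, Function.Embedding.coeFn_mk] at hL
    by_contra! h
    rcases Nat.le_one_iff_eq_zero_or_eq_one.1 h with h | h
    · exact hL.1 (card_eq_zero.1 h)
    · obtain ⟨a, rfl⟩ := card_eq_one.1 h
      exact hL.2 ⟨a, rfl⟩

lemma lollipop_adj_inl_inl {m n : ℕ} {i j : Fin m} :
    (lollipop m n).Adj (.inl i) (.inl j) ↔ i ≠ j := by
  simp [lollipop]

lemma lollipop_adj_inr_inr {m n : ℕ} {i j : Fin n} :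
    (lollipop m n).Adj (.inr i) (.inr j) ↔ (i : ℕ) + 1 = j ∨ (j : ℕ) + 1 = i := by
  simp only [lollipop, SimpleGraph.fromRel_adj, ne_eq, Sum.inr.injEq]
  constructor
  · rintro ⟨-, h | h⟩ <;> omega
  · intro h
    exact ⟨fun hij => by subst hij; omega, by omega⟩

lemma lollipop_adj_inl_inr {m n : ℕ} {i : Fin m} {j : Fin n} :
    (lollipop m n).Adj (.inl i) (.inr j) ↔ (i : ℕ) = m - 1 ∧ (j : ℕ) = 0 := by
  simp [lollipop]

lemma lollipop_indep_disjSum_iff {M N : ℕ} (L : Finset (Fin (M + 1)))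
    (R : Finset (Fin (N + 1))) :
    (∀ x ∈ L.disjSum R, ∀ y ∈ L.disjSum R, ¬(lollipop (M + 1) (N + 1)).Adj x y) ↔
      (∀ i ∈ L, ∀ j ∈ L, i = j) ∧ IsSparse (R.map Fin.valEmbedding) ∧
        (Fin.last M ∈ L → 0 ∉ R) := by
  simp only [Sum.forall, inl_mem_disjSum, inr_mem_disjSum, lollipop_adj_inl_inl,
    lollipop_adj_inr_inr, SimpleGraph.adj_comm _ (Sum.inr _) (Sum.inl _), lollipop_adj_inl_inr,
    isSparse_map_valEmbedding_iff, Nat.add_sub_cancel, Fin.val_eq_zero_iff, ne_eq, not_not, not_and]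
  constructor
  · rintro ⟨hL, hR⟩
    exact ⟨fun i hi => (hL i hi).1, fun i hi => (hR i hi).2,
      fun hlast h0 => (hL _ hlast).2 0 h0 rfl rfl⟩
  · rintro ⟨hL, hR, hlast⟩
    have key : ∀ a ∈ L, ∀ b ∈ R, (a : ℕ) = M → b ≠ 0 := fun a ha b hb haM hb0 =>
      hlast ((Fin.ext haM : a = Fin.last M) ▸ ha) (hb0 ▸ hb)
    exact ⟨fun a ha => ⟨hL a ha, fun b hb => key a ha b hb⟩,
      fun b hb => ⟨fun a ha => key a ha b hb, hR b hb⟩⟩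

theorem coeff_indepPoly_lollipop (M N k : ℕ) :
    (indepPoly (lollipop (M + 1) (N + 1))).coeff (k + 1) =
      pathCoeff (N + 1) (k + 1) + M * pathCoeff (N + 1) k + pathCoeff N k := by
  classical
  -- split by the clique part: empty, a vertex `Fin.castSucc i`, or the bridge vertex `Fin.last M`
  rw [coeff_indepPoly, card_filter_eq_sum_disjSum, sum_finset_eq_empty_add_sum_singleton,
    Fin.sum_univ_castSucc]
  · simp only [lollipop_indep_disjSum_iff, card_disjSum, card_empty, card_singleton, zero_add,
      notMem_empty, mem_singleton, forall_eq, IsEmpty.forall_iff, and_true, true_and,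
      (Fin.castSucc_ne_last _).symm, add_comm 1, add_left_inj, and_assoc,
      card_isSparse_map_valEmbedding, card_isSparse_map_valEmbedding_of_zero_notMem, sum_const,
      card_univ, Fintype.card_fin, smul_eq_mul, implies_true, true_implies, add_assoc]
  · intro L hL
    obtain ⟨i, hi, j, hj, hij⟩ := one_lt_card.1 hL
    refine card_filter_eq_zero_iff.2 fun R _ hR => ?_
    exact hij (((lollipop_indep_disjSum_iff L R).1 hR.1).1 i hi j hj)

lemma coeff_indepPoly_lollipop_lt_succ (M N j : ℕ)
    (h : pathCoeff (N + 1) j < pathCoeff (N + 1) (j + 1)) :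
    (indepPoly (lollipop (M + 1) (N + 1))).coeff j <
      (indepPoly (lollipop (M + 1) (N + 1))).coeff (j + 1) := by
  rcases j with _ | k
  · rw [coeff_zero_indepPoly, coeff_indepPoly_lollipop]
    simp [pathCoeff]
  rw [coeff_indepPoly_lollipop, coeff_indepPoly_lollipop]
  have hp := Nat.mul_le_mul_left M (pathCoeff_lt_succ_of_succ h).le
  have hc := pathCoeff_lt_succ_of_succ_lt h
  omega

lemma coeff_indepPoly_lollipop_succ_le (M N j : ℕ)
    (h₁ : pathCoeff (N + 1) (j + 2) ≤ pathCoeff (N + 1) (j + 1))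
    (h₀ : pathCoeff (N + 1) (j + 1) ≤ pathCoeff (N + 1) j) :
    (indepPoly (lollipop (M + 1) (N + 1))).coeff (j + 2) ≤
      (indepPoly (lollipop (M + 1) (N + 1))).coeff (j + 1) := by
  rw [coeff_indepPoly_lollipop, coeff_indepPoly_lollipop]
  change pathCoeff (N + 1) (j + 2) + _ + _ ≤ _
  have hp := Nat.mul_le_mul_left M h₀
  have hc : pathCoeff N (j + 1) ≤ pathCoeff N j :=
    not_lt.1 fun hc => (pathCoeff_succ_lt_succ_of_lt hc).not_ge h₀
  omega

/-- For all `m, n ≥ 1`, the mode `η_{m,n}` of the independence polynomial of the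
lollipop graph `L_{m,n}` lies in `{λ_n, λ_n + 1}`, where `λ_n` is the mode of the
independence polynomial of the path `P_n`. -/
theorem lollipop_mode_mem (m n : ℕ) (hm : 1 ≤ m) (hn : 1 ≤ n) (l e : ℕ)
    (hl : PolyIsMode (indepPoly (SimpleGraph.pathGraph n)) l)
    (he : PolyIsMode (indepPoly (lollipop m n)) e) :
    e = l ∨ e = l + 1 := by
  obtain ⟨M, rfl⟩ : ∃ M, m = M + 1 := ⟨m - 1, by omega⟩
  obtain ⟨N, rfl⟩ : ∃ N, n = N + 1 := ⟨n - 1, by omega⟩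
  obtain ⟨-, hrise, hfall⟩ := hl
  simp only [coeff_indepPoly_pathGraph] at hrise hfall
  have hle : l ≤ e := by
    rcases l with _ | j
    · exact Nat.zero_le e
    · exact he.lt_of_coeff_lt (coeff_indepPoly_lollipop_lt_succ M N j (hrise j rfl))
  have hge : e ≤ l + 1 := he.le_of_coeff_succ_le fun j hj => by
    obtain ⟨i, rfl⟩ : ∃ i, j = i + 1 := ⟨j - 1, by omega⟩
    exact coeff_indepPoly_lollipop_succ_le M N i (hfall (i + 1) (by omega)) (hfall i (by omega))
  omega
end
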